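/- A nonconstant polynomial u ∈ ℤ[X] is locally nilpotent at 0 but not nilpotent at 0 if and only if it has one of the following forms: (1) u(X) = X + b with b ∈ ℤ \ {0}; (2) u(X) = aX + b with b ≠ 0, a having at least one prime factor, and every prime factor of a dividing b. -/

import Mathlib

open Polynomial

/-- The `n`-th compositional iterate of the polynomial `u`, evaluated at `r`. -/
def iterEval (u : Polynomial ℤ) (n : ℕ) (r : ℤ) : ℤ :=
  (fun x => Polynomial.eval x u)^[n] r

/-- `u` is weakly locally nilpotent at `r` outside `A`: for every prime `p ∉ A`
there is `m ≥ 1` with `p ∣ u^{(m)}(r)`. -/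
def WeaklyLocallyNilpotentAt (u : Polynomial ℤ) (r : ℤ) (A : Set ℕ) : Prop :=
  ∀ p : ℕ, Nat.Prime p → p ∉ A → ∃ m : ℕ, 1 ≤ m ∧ (p : ℤ) ∣ iterEval u m r

/-- `u` is locally nilpotent at `r`: for every prime `p` there is `m ≥ 1`
with `p ∣ u^{(m)}(r)`. -/
def LocallyNilpotentAt (u : Polynomial ℤ) (r : ℤ) : Prop :=
  ∀ p : ℕ, Nat.Prime p → ∃ m : ℕ, 1 ≤ m ∧ (p : ℤ) ∣ iterEval u m r

/-- `u` is nilpotent at `r`: some iterate `u^{(n)}(r)` (with `n ≥ 1`) equals `0`. -/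
def IsNilpotentAt (u : Polynomial ℤ) (r : ℤ) : Prop :=
  ∃ n : ℕ, 1 ≤ n ∧ iterEval u n r = 0

/-- `u` is nilpotent at `r` with nilpotency index exactly `i`. -/
def NilpotentOfIndex (u : Polynomial ℤ) (r : ℤ) (i : ℕ) : Prop :=
  1 ≤ i ∧ iterEval u i r = 0 ∧ ∀ m : ℕ, 1 ≤ m → m < i → iterEval u m r ≠ 0

/-!
Let `x n = u^[n] 0`. If `u` is locally nilpotent at `0`, then `0` is a periodic point of `u`
modulo every prime `p`, so `p ∣ x (n + k) - x n` forces `p ∣ x k`.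

For affine `u = a X + b` one has `x n = b (1 + a + ⋯ + a ^ (n - 1))`, and for `p ∤ a` the map
`t ↦ a t + b` permutes `ZMod p`; this gives the classification directly.

If `deg u ≥ 2` and `0` is not nilpotent, the orbit is unbounded, since a prime exceeding every
`|x n|` could divide no `x n`. As `y - z ∣ u y - u z`, we may write
`x (n + 2) - x (n + 1) = (x (n + 1) - x n) A`. By the periodicity above, the prime factors of `A`
divide `x 1` and those of `A + 1` divide `x 2`, so Størmer's theorem bounds `|A|`. But `|u t|`
grows faster than `|t|`, which makes `|A|` large as soon as `|x n|` is.

Størmer's theorem is proved through Pell equations: `t (t + 1) = D w ^ 2` makes `(2t + 1, 2w)` a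
solution of `X ^ 2 - D Y ^ 2 = 1`. A lifting-the-exponent bound `v_q (y n) ≤ C_q + v_q n` for the
powers of the fundamental solution shows that `y n` divides `C * n` when it is `S`-smooth, while
`y n ≥ 2 ^ (n - 1)`; so only finitely many powers qualify.
-/

theorem Nat.le_two_mul_of_two_pow_le_mul {m M : ℕ} (h : 2 ^ m ≤ M * (m + 1)) : m ≤ 2 * M := by
  have hchoose := Nat.add_one_mul_choose_eq m 1
  rw [Nat.choose_one_right] at hchoose
  have := Nat.choose_succ_le_two_pow m 2
  have : (m + 1) * m ≤ (m + 1) * (2 * M) := by nlinarith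
  exact Nat.le_of_mul_le_mul_left this m.succ_pos

theorem Int.exists_prime_dvd_iff_natAbs_ne_one (a : ℤ) :
    (∃ p : ℕ, p.Prime ∧ (p : ℤ) ∣ a) ↔ a.natAbs ≠ 1 := by
  refine ⟨fun ⟨p, hp, hpa⟩ h => hp.ne_one (Nat.dvd_one.mp (h ▸ Int.natCast_dvd.mp hpa)),
    fun h => ?_⟩
  obtain ⟨p, hp, hpa⟩ := Nat.exists_prime_and_dvd h
  exact ⟨p, hp, Int.natCast_dvd.mpr hpa⟩

theorem Polynomial.C_mul_X_add_C_eq_iff {R : Type*} [Semiring R] {a b a' b' : R} :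
    C a * X + C b = C a' * X + C b' ↔ a = a' ∧ b = b' := by
  refine ⟨fun h => ⟨?_, ?_⟩, ?_⟩
  · simpa using congrArg (coeff · 1) h
  · simpa using congrArg (coeff · 0) h
  rintro ⟨rfl, rfl⟩
  rfl

theorem Polynomial.exists_mul_abs_le_abs_eval {u : ℤ[X]} (hu : 2 ≤ u.natDegree) (K : ℤ) :
    ∃ R : ℤ, 1 ≤ R ∧ ∀ x, R ≤ |x| → K * |x| ≤ |u.eval x| := by
  have hdeg : 0 < u.divX.degree :=
    natDegree_pos_iff_degree_pos.mp (by rw [natDegree_divX_eq_natDegree_tsub_one]; omega)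
  obtain ⟨r, -, hr⟩ := ((Filter.atTop_basis.comap fun x : ℤ => ‖x‖).eventually_iff).mp <|
    (u.divX.tendsto_norm_atTop hdeg Filter.tendsto_comap).eventually_ge_atTop
      ((K + |u.coeff 0| : ℤ) : ℝ)
  refine ⟨max 1 ⌈r⌉, le_max_left _ _, fun x hx => ?_⟩
  have hdivX : K + |u.coeff 0| ≤ |u.divX.eval x| := by
    have hrx : r ≤ ‖x‖ := by
      rw [Int.norm_eq_abs, ← Int.cast_abs]
      exact Int.ceil_le.mp ((le_max_right _ _).trans hx)
    have h := hr hrx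
    rw [Int.norm_eq_abs, ← Int.cast_abs] at h
    exact_mod_cast h
  have hsplit : u.eval x = x * u.divX.eval x + u.coeff 0 := by
    conv_lhs => rw [← X_mul_divX_add u]
    simp
  have := abs_add_le (x * u.divX.eval x + u.coeff 0) (-u.coeff 0)
  rw [abs_neg, add_neg_cancel_right, abs_mul] at this
  rw [hsplit]
  nlinarith [(le_max_left _ _).trans hx, abs_nonneg (u.coeff 0)]

theorem le_two_mul_abs_add_one_of_sub_eq_mul {u : ℤ[X]} {K R x A : ℤ} (hK : 1 ≤ K)
    (hgrowth : ∀ y, R ≤ |y| → K * |y| ≤ |u.eval y|) (hR : 1 ≤ R) (hx : R ≤ |x|)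
    (hA : u.eval (u.eval x) - u.eval x = (u.eval x - x) * A) : K ≤ 2 * |A| + 1 := by
  set y := u.eval x
  have hxy : K * |x| ≤ |y| := hgrowth x hx
  have hyR : R ≤ |y| := by nlinarith
  have hyz := hgrowth y hyR
  have h1 : |u.eval y - y| = |y - x| * |A| := by rw [hA, abs_mul]
  have h2 : |y - x| ≤ 2 * |y| := (abs_sub _ _).trans (by nlinarith)
  have h3 : |u.eval y| - |y| ≤ |u.eval y - y| := abs_sub_abs_le_abs_sub _ _
  nlinarith [abs_nonneg A]

namespace Pell.Solution₁

variable {d : ℤ}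

theorem y_dvd_y_pow (s : Solution₁ d) (k : ℕ) : s.y ∣ (s ^ k).y := by
  induction k with
  | zero => simp [y_one]
  | succ k ih =>
    rw [pow_succ, y_mul]
    exact dvd_add (dvd_mul_left _ _) (ih.mul_right _)

theorem sq_y_dvd_x_pow_sub (s : Solution₁ d) (k : ℕ) : s.y ^ 2 ∣ (s ^ k).x - s.x ^ k := by
  induction k with
  | zero => simp [x_one]
  | succ k ih =>
    obtain ⟨A, hA⟩ := ih
    obtain ⟨B, hB⟩ := y_dvd_y_pow s k
    rw [pow_succ s k, x_mul, hB]
    exact ⟨A * s.x + d * B, by linear_combination s.x * hA⟩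

theorem exists_y_pow_succ_eq (s : Solution₁ d) (k : ℕ) :
    ∃ c, (s ^ (k + 1)).y = s.y * c ∧ s.y ^ 2 ∣ c - (k + 1) * s.x ^ k := by
  induction k with
  | zero => exact ⟨1, by simp, by simp⟩
  | succ k ih =>
    obtain ⟨c, hc, A, hA⟩ := ih
    obtain ⟨B, hB⟩ := sq_y_dvd_x_pow_sub s (k + 1)
    refine ⟨(s ^ (k + 1)).x + c * s.x, ?_, A * s.x + B, ?_⟩
    · rw [pow_succ _ (k + 1), y_mul, hc]
      ring
    · push_cast
      linear_combination s.x * hA + hB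

theorem not_dvd_x_of_dvd_y {q : ℤ} (hq : ¬IsUnit q) (s : Solution₁ d) (hy : q ∣ s.y) :
    ¬q ∣ s.x := fun hx =>
  hq <| IsCoprime.isUnit_of_dvd' ⟨s.x, -d * s.y, by linear_combination s.prop⟩ hx hy

section padicValInt

variable {q : ℕ} [hq : Fact q.Prime] {s : Solution₁ d}

theorem padicValInt_y_pow_of_not_dvd (hy : (q : ℤ) ∣ s.y) {k : ℕ} (hk : ¬q ∣ k)
    (h0 : (s ^ k).y ≠ 0) : padicValInt q (s ^ k).y = padicValInt q s.y := by
  have hk0 : k ≠ 0 := by rintro rfl; exact hk (dvd_zero q)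
  obtain ⟨k, rfl⟩ : ∃ k', k = k' + 1 := ⟨k - 1, by omega⟩
  obtain ⟨c, hc, hcong⟩ := exists_y_pow_succ_eq s k
  have hqZ : Prime (q : ℤ) := Nat.prime_iff_prime_int.mp hq.out
  have hqc : ¬(q : ℤ) ∣ c := by
    intro hqc
    have : (q : ℤ) ∣ (k + 1) * s.x ^ k :=
      (dvd_sub_right hqc).mp ((dvd_pow hy two_ne_zero).trans hcong)
    rcases hqZ.dvd_or_dvd this with h | h
    · exact hk (by exact_mod_cast h)
    · exact not_dvd_x_of_dvd_y hqZ.not_isUnit s hy (hqZ.dvd_of_dvd_pow h)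
  rw [hc] at h0 ⊢
  rw [padicValInt.mul (left_ne_zero_of_mul h0) (right_ne_zero_of_mul h0),
    padicValInt.eq_zero_of_not_dvd hqc, add_zero]

theorem padicValInt_y_pow_self_le (hy : (q : ℤ) ∣ s.y) (h0 : (s ^ q).y ≠ 0) :
    padicValInt q (s ^ q).y ≤ padicValInt q s.y + 1 := by
  obtain ⟨k, hk⟩ : ∃ k, q = k + 1 := ⟨q - 1, by have := hq.out.one_lt; omega⟩
  obtain ⟨c, hc, hcong⟩ := exists_y_pow_succ_eq s k
  have hqZ : Prime (q : ℤ) := Nat.prime_iff_prime_int.mp hq.out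
  have hqc : ¬(q : ℤ) ^ 2 ∣ c := by
    intro hqc
    have h1 : (q : ℤ) ^ 2 ∣ q * s.x ^ k := by
      have := (pow_dvd_pow_of_dvd hy 2).trans hcong
      rw [show ((k : ℤ) + 1) = q by rw [hk]; push_cast; ring] at this
      exact (dvd_sub_right hqc).mp this
    rw [pow_two] at h1
    exact not_dvd_x_of_dvd_y hqZ.not_isUnit s hy
      (hqZ.dvd_of_dvd_pow ((mul_dvd_mul_iff_left hqZ.ne_zero).mp h1))
  rw [← hk] at hc
  rw [hc] at h0 ⊢
  rw [padicValInt.mul (left_ne_zero_of_mul h0) (right_ne_zero_of_mul h0)]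
  have := (padicValInt_dvd_iff 2 c).not.mp hqc
  omega

theorem padicValInt_y_pow_le (hy : (q : ℤ) ∣ s.y) {k : ℕ} (h0 : (s ^ k).y ≠ 0) :
    padicValInt q (s ^ k).y ≤ padicValInt q s.y + padicValNat q k := by
  induction k using Nat.strong_induction_on generalizing s with
  | _ k ih =>
  by_cases hk : q ∣ k
  · obtain ⟨k', rfl⟩ := hk
    have hk' : k' ≠ 0 := by rintro rfl; simp [y_one] at h0
    rw [pow_mul] at h0 ⊢
    have h0q : (s ^ q).y ≠ 0 := fun h => h0 <| by
      obtain ⟨c, hc⟩ := y_dvd_y_pow (s ^ q) k'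
      rw [hc, h, zero_mul]
    have h1 := ih k' (lt_mul_left (Nat.pos_of_ne_zero hk') hq.out.one_lt)
      (hy.trans (y_dvd_y_pow s q)) h0
    have h2 := padicValInt_y_pow_self_le hy h0q
    rw [padicValNat.mul hq.out.ne_zero hk', padicValNat_self]
    omega
  · rw [padicValInt_y_pow_of_not_dvd hy hk h0]
    omega

end padicValInt

def yDvdSubgroup (d m : ℤ) : Subgroup (Solution₁ d) where
  carrier := {s | m ∣ s.y}
  mul_mem' {a b} (ha : m ∣ a.y) (hb : m ∣ b.y) := show m ∣ (a * b).y by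
    rw [y_mul]
    exact dvd_add (hb.mul_left _) (ha.mul_right _)
  one_mem' := by simp [y_one]
  inv_mem' {a} ha := by simpa [y_inv] using ha

theorem exists_padicValInt_y_pow_le (q : ℕ) [Fact q.Prime] (a : Solution₁ d)
    (ha : ∀ n, 0 < n → (a ^ n).y ≠ 0) :
    ∃ C, ∀ n, 0 < n → padicValInt q (a ^ n).y ≤ C + padicValNat q n := by
  -- `orderOf g` is the rank of apparition of `q`: `q ∣ (a ^ n).y ↔ orderOf g ∣ n`.
  let g : Solution₁ d ⧸ yDvdSubgroup d q := a
  have hg (n : ℕ) : g ^ n = 1 ↔ (q : ℤ) ∣ (a ^ n).y := QuotientGroup.eq_one_iff (a ^ n)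
  refine ⟨padicValInt q (a ^ orderOf g).y, fun n hn => ?_⟩
  by_cases hqn : (q : ℤ) ∣ (a ^ n).y
  · have hpos : 0 < orderOf g :=
      orderOf_pos_iff.mpr (isOfFinOrder_iff_pow_eq_one.mpr ⟨n, hn, (hg n).mpr hqn⟩)
    obtain ⟨k, rfl⟩ := orderOf_dvd_of_pow_eq_one ((hg _).mpr hqn)
    have hk : k ≠ 0 := by rintro rfl; simp at hn
    have := padicValInt_y_pow_le ((hg _).mp (pow_orderOf_eq_one g)) (k := k)
      (by rw [← pow_mul]; exact ha _ hn)
    rw [pow_mul, padicValNat.mul hpos.ne' hk]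
    omega
  · rw [padicValInt.eq_zero_of_not_dvd hqn]
    positivity

end Pell.Solution₁

namespace Pell.IsFundamental

open Solution₁

variable {d : ℤ} {a : Solution₁ d}

theorem two_pow_le_y_pow_succ (ha : IsFundamental a) (n : ℕ) : 2 ^ n ≤ (a ^ (n + 1)).y := by
  induction n with
  | zero =>
    have := ha.2.1
    simp only [zero_add, pow_one, pow_zero]
    omega
  | succ n ih =>
    rw [pow_succ a (n + 1), y_mul, pow_succ]
    have hx : 2 ≤ a.x := ha.1
    have h1 : 2 ^ n * 2 ≤ (a ^ (n + 1)).y * a.x :=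
      mul_le_mul ih hx (by norm_num) ((by positivity : (0 : ℤ) ≤ 2 ^ n).trans ih)
    have h2 := mul_pos (x_pow_pos ha.x_pos (n + 1)) ha.2.1
    linarith

theorem finite_setOf_y_pow_mem_factoredNumbers (ha : IsFundamental a) (s : Finset ℕ) :
    {n : ℕ | (a ^ n).y.natAbs ∈ Nat.factoredNumbers s}.Finite := by
  have hy (n : ℕ) (hn : 0 < n) : (a ^ n).y ≠ 0 := by
    obtain ⟨m, rfl⟩ : ∃ m, n = m + 1 := ⟨n - 1, by omega⟩
    exact (y_pow_succ_pos ha.x_pos ha.2.1 m).ne'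
  have hC (q : ℕ) : ∃ C, q.Prime → ∀ n, 0 < n →
      padicValNat q (a ^ n).y.natAbs ≤ C + padicValNat q n := by
    by_cases hq : q.Prime
    · have := Fact.mk hq
      exact (exists_padicValInt_y_pow_le q a hy).imp fun C hC _ => hC
    · exact ⟨0, fun h => absurd h hq⟩
  choose C hC using hC
  set M := ∏ q ∈ s.filter Nat.Prime, q ^ C q
  have hM : M ≠ 0 := Finset.prod_ne_zero_iff.mpr fun q hq =>
    pow_ne_zero _ (Finset.mem_filter.mp hq).2.ne_zero
  refine (Set.finite_Iic (2 * M + 1)).subset fun n hn => ?_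
  obtain rfl | hn0 := Nat.eq_zero_or_pos n
  · exact Nat.zero_le _
  have hY : (a ^ n).y.natAbs ≠ 0 := Int.natAbs_ne_zero.mpr (hy n hn0)
  have hdvd : (a ^ n).y.natAbs ∣ M * n := by
    refine (Nat.factorization_prime_le_iff_dvd hY (mul_ne_zero hM hn0.ne')).mp fun q hq => ?_
    rw [Nat.factorization_mul hM hn0.ne', Finsupp.add_apply]
    by_cases hqs : q ∈ s
    · have hCM : C q ≤ M.factorization q := (hq.pow_dvd_iff_le_factorization hM).mp <|
        Finset.dvd_prod_of_mem _ (Finset.mem_filter.mpr ⟨hqs, hq⟩)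
      have := hC q hq n hn0
      rw [Nat.factorization_def _ hq, Nat.factorization_def n hq]
      omega
    · rw [Nat.factorization_eq_zero_of_not_dvd
        fun h => hqs (Nat.mem_factoredNumbers'.mp hn q hq h)]
      exact Nat.zero_le _
  obtain ⟨m, rfl⟩ : ∃ m, n = m + 1 := ⟨n - 1, by omega⟩
  have h2 : 2 ^ m ≤ (a ^ (m + 1)).y.natAbs := by
    have := ha.two_pow_le_y_pow_succ m
    zify
    rwa [abs_of_pos (y_pow_succ_pos ha.x_pos ha.2.1 m)]
  have := Nat.le_two_mul_of_two_pow_le_mul <|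
    h2.trans (Nat.le_of_dvd (Nat.pos_of_ne_zero (mul_ne_zero hM (by omega))) hdvd)
  simp only [Set.mem_Iic]
  omega

end Pell.IsFundamental

namespace Nat

theorem finite_setOf_mul_succ_eq_mul_sq (s : Finset ℕ) (D : ℕ) :
    {t : ℕ | t * (t + 1) ∈ factoredNumbers s ∧ ∃ w, t * (t + 1) = D * w ^ 2}.Finite := by
  by_cases hD : IsSquare (D : ℤ)
  · refine Set.finite_empty.subset fun t ⟨hsm, w, hw⟩ => ?_
    obtain ⟨k, hk⟩ := hD
    have ht : t ≠ 0 := by rintro rfl; exact ne_zero_of_mem_factoredNumbers hsm rfl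
    refine Nat.not_exists_sq (m := t) (n := t * (t + 1)) (by nlinarith [Nat.pos_of_ne_zero ht])
      (by nlinarith) ⟨k.natAbs * w, ?_⟩
    zify
    rw [(by exact_mod_cast hw : (t : ℤ) * (t + 1) = D * w ^ 2), hk, ← abs_mul_abs_self k]
    ring
  have hD0 : (0 : ℤ) < D :=
    Int.natCast_pos.mpr (Nat.pos_of_ne_zero (by rintro rfl; exact hD ⟨0, by simp⟩))
  obtain ⟨a, ha⟩ := Pell.IsFundamental.exists_of_not_isSquare hD0 hD
  refine ((ha.finite_setOf_y_pow_mem_factoredNumbers (insert 2 s)).image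
    fun n => (a ^ n).x.toNat / 2).subset fun t ⟨hsm, w, hw⟩ => ?_
  have hsol : (2 * (t : ℤ) + 1) ^ 2 - D * (2 * w) ^ 2 = 1 := by
    linear_combination (4 : ℤ) * (by exact_mod_cast hw : (t : ℤ) * (t + 1) = D * w ^ 2)
  obtain ⟨n, hn⟩ := ha.eq_pow_of_nonneg (a := .mk _ _ hsol)
    (by rw [Pell.Solution₁.x_mk]; positivity) (by rw [Pell.Solution₁.y_mk]; positivity)
  refine ⟨n, ?_, ?_⟩
  · show (a ^ n).y.natAbs ∈ factoredNumbers (insert 2 s)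
    rw [← hn, Pell.Solution₁.y_mk, mem_factoredNumbers']
    intro p hp hpw
    have hpw : p ∣ 2 * w := by exact_mod_cast (Int.natCast_dvd.mpr hpw)
    rcases hp.dvd_mul.mp hpw with h | h
    · exact Finset.mem_insert.mpr (Or.inl ((Nat.prime_dvd_prime_iff_eq hp Nat.prime_two).mp h))
    · exact Finset.mem_insert_of_mem (mem_factoredNumbers'.mp hsm p hp
        (h.trans ⟨D * w, by rw [hw]; ring⟩))
  · show (a ^ n).x.toNat / 2 = t
    rw [← hn, Pell.Solution₁.x_mk]
    omega

/-- Størmer's theorem. -/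
theorem finite_setOf_mul_succ_mem_factoredNumbers (s : Finset ℕ) :
    {t : ℕ | t * (t + 1) ∈ factoredNumbers s}.Finite := by
  refine ((s.powerset.finite_toSet.image fun T => ∏ p ∈ T, p).biUnion
    fun D _ => finite_setOf_mul_succ_eq_mul_sq s D).subset fun t ht => ?_
  obtain ⟨D, w, hw, hD⟩ := Nat.sq_mul_squarefree (t * (t + 1))
  have hDs : D.primeFactors ⊆ s := primeFactors_subset_of_mem_factoredNumbers <|
    mem_factoredNumbers_of_dvd ht ⟨w ^ 2, by rw [← hw]; ring⟩
  exact Set.mem_biUnion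
    ⟨D.primeFactors, Finset.mem_powerset.mpr hDs, prod_primeFactors_of_squarefree hD⟩
    ⟨ht, w, by rw [← hw]; ring⟩

end Nat

theorem Int.finite_setOf_natAbs_mul_succ_mem_factoredNumbers (s : Finset ℕ) :
    {A : ℤ | (A * (A + 1)).natAbs ∈ Nat.factoredNumbers s}.Finite := by
  have hT := Nat.finite_setOf_mul_succ_mem_factoredNumbers s
  refine ((hT.image fun t : ℕ => (t : ℤ)).union (hT.image fun t : ℕ => -(t : ℤ) - 1)).subset
    fun A hA => ?_
  rcases le_or_gt 0 A with h | h
  · refine Or.inl ⟨A.toNat, show _ ∈ Nat.factoredNumbers s from ?_, Int.toNat_of_nonneg h⟩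
    have : ((A.toNat * (A.toNat + 1) : ℕ) : ℤ) = A * (A + 1) := by
      push_cast
      rw [Int.toNat_of_nonneg h]
    rwa [← Int.natAbs_natCast (A.toNat * _), this]
  · refine Or.inr ⟨(-A - 1).toNat, show _ ∈ Nat.factoredNumbers s from ?_,
      show -(((-A - 1).toNat : ℕ) : ℤ) - 1 = A by omega⟩
    have : (((-A - 1).toNat * ((-A - 1).toNat + 1) : ℕ) : ℤ) = A * (A + 1) := by
      push_cast
      rw [Int.toNat_of_nonneg (by omega)]
      ring
    rwa [← Int.natAbs_natCast (_ * _), this]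

section Orbit

variable {u : ℤ[X]}

noncomputable abbrev evalZMod (u : ℤ[X]) (m : ℕ) (x : ZMod m) : ZMod m :=
  (u.map (Int.castRingHom (ZMod m))).eval x

theorem iterEval_succ (u : ℤ[X]) (n : ℕ) (r : ℤ) :
    iterEval u (n + 1) r = eval (iterEval u n r) u :=
  Function.iterate_succ_apply' _ n r

theorem intCast_iterEval (u : ℤ[X]) (m n : ℕ) (r : ℤ) :
    ((iterEval u n r : ℤ) : ZMod m) = (evalZMod u m)^[n] r :=
  (Function.Semiconj.iterate_right (fun x => by simp) n) r

theorem exists_dvd_iterEval_zero_iff_mem_periodicPts (p : ℕ) :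
    (∃ m, 1 ≤ m ∧ (p : ℤ) ∣ iterEval u m 0) ↔
      (0 : ZMod p) ∈ Function.periodicPts (evalZMod u p) := by
  simp only [Function.mem_periodicPts, Function.IsPeriodicPt, Function.IsFixedPt,
    ← ZMod.intCast_zmod_eq_zero_iff_dvd, intCast_iterEval, Int.cast_zero]
  rfl

theorem LocallyNilpotentAt.dvd_iterEval_of_dvd_sub (hL : LocallyNilpotentAt u 0) {p : ℕ}
    (hp : p.Prime) {n k : ℕ} (h : (p : ℤ) ∣ iterEval u (k + n) 0 - iterEval u n 0) :
    (p : ℤ) ∣ iterEval u k 0 := by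
  rw [← ZMod.intCast_eq_intCast_iff_dvd_sub, intCast_iterEval, intCast_iterEval,
    Function.iterate_add_apply, Int.cast_zero] at h
  have := Function.isPeriodicPt_of_mem_periodicPts_of_isPeriodicPt_iterate
    ((exists_dvd_iterEval_zero_iff_mem_periodicPts p).mp (hL p hp)) h.symm
  rw [← ZMod.intCast_zmod_eq_zero_iff_dvd, intCast_iterEval]
  exact_mod_cast this

theorem exists_le_abs_iterEval (hL : LocallyNilpotentAt u 0) (hN : ¬IsNilpotentAt u 0)
    (R : ℤ) : ∃ n, 1 ≤ n ∧ R ≤ |iterEval u n 0| := by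
  by_contra! hR
  obtain ⟨p, hpR, hp⟩ := Nat.exists_infinite_primes R.toNat
  obtain ⟨m, hm, hdvd⟩ := hL p hp
  have := Int.le_of_dvd (abs_pos.mpr fun h => hN ⟨m, hm, h⟩) ((dvd_abs _ _).mpr hdvd)
  have := hR m hm
  omega

theorem LocallyNilpotentAt.dvd_mul_of_dvd_mul_add_one (hL : LocallyNilpotentAt u 0) {p : ℕ}
    (hp : p.Prime) {n : ℕ} {A : ℤ}
    (hA : iterEval u (n + 2) 0 - iterEval u (n + 1) 0 =
      (iterEval u (n + 1) 0 - iterEval u n 0) * A)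
    (h : (p : ℤ) ∣ A * (A + 1)) : (p : ℤ) ∣ iterEval u 1 0 * iterEval u 2 0 := by
  rcases (Nat.prime_iff_prime_int.mp hp).dvd_or_dvd h with hpA | hpA
  · refine (hL.dvd_iterEval_of_dvd_sub hp (n := n + 1) ?_).mul_right _
    rw [show 1 + (n + 1) = n + 2 by ring, hA]
    exact hpA.mul_left _
  · refine (hL.dvd_iterEval_of_dvd_sub hp (n := n) ?_).mul_left _
    have : iterEval u (2 + n) 0 - iterEval u n 0 =
        (iterEval u (n + 1) 0 - iterEval u n 0) * (A + 1) := by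
      rw [show 2 + n = n + 2 by ring]
      linear_combination hA
    rw [this]
    exact hpA.mul_left _

theorem isNilpotentAt_of_locallyNilpotentAt (hu : 2 ≤ u.natDegree)
    (hL : LocallyNilpotentAt u 0) : IsNilpotentAt u 0 := by
  by_contra hN
  have hx : iterEval u 1 0 * iterEval u 2 0 ≠ 0 :=
    mul_ne_zero (fun h => hN ⟨1, le_rfl, h⟩) (fun h => hN ⟨2, by norm_num, h⟩)
  obtain ⟨B, hB⟩ := ((Int.finite_setOf_natAbs_mul_succ_mem_factoredNumbers
    (iterEval u 1 0 * iterEval u 2 0).natAbs.primeFactors).image abs).bddAbove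
  obtain ⟨R, hR1, hR⟩ := exists_mul_abs_le_abs_eval hu (2 * |B| + 3)
  obtain ⟨n, -, hn⟩ := exists_le_abs_iterEval hL hN R
  obtain ⟨A, hA⟩ : iterEval u (n + 1) 0 - iterEval u n 0 ∣
      iterEval u (n + 2) 0 - iterEval u (n + 1) 0 := by
    rw [iterEval_succ, iterEval_succ _ (n + 1), iterEval_succ]
    exact sub_dvd_eval_sub _ _ _
  have hAB : |A| ≤ B := hB ⟨A, Nat.mem_factoredNumbers'.mpr fun p hp hpA =>
    Nat.mem_primeFactors.mpr
      ⟨hp, Int.natCast_dvd.mp (hL.dvd_mul_of_dvd_mul_add_one hp hA (Int.natCast_dvd.mpr hpA)),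
        Int.natAbs_ne_zero.mpr hx⟩, rfl⟩
  have := le_two_mul_abs_add_one_of_sub_eq_mul (by linarith [abs_nonneg B]) hR hR1 hn
    (by simpa only [← iterEval_succ] using hA)
  linarith [le_abs_self B]

end Orbit

section Affine

variable {a b : ℤ}

theorem iterEval_affine (a b : ℤ) (n : ℕ) :
    iterEval (C a * X + C b) n 0 = b * ∑ i ∈ Finset.range n, a ^ i := by
  induction n with
  | zero => simp [iterEval]
  | succ n ih =>
    rw [iterEval_succ, ih, geom_sum_succ]
    simp only [eval_add, eval_mul, eval_C, eval_X]
    ring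

theorem isNilpotentAt_affine_iff : IsNilpotentAt (C a * X + C b) 0 ↔ b = 0 ∨ a = -1 := by
  simp only [IsNilpotentAt, iterEval_affine, mul_eq_zero]
  constructor
  · rintro ⟨n, hn, hb | hgeom⟩
    · exact Or.inl hb
    · exact Or.inr ((geom_sum_eq_zero_iff_neg_one (by omega)).mp hgeom).1
  · rintro (hb | rfl)
    · exact ⟨1, le_rfl, Or.inl hb⟩
    · exact ⟨2, by norm_num, Or.inr (by simp [Finset.sum_range_succ])⟩

theorem locallyNilpotentAt_affine_iff :
    LocallyNilpotentAt (C a * X + C b) 0 ↔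
      ∀ p : ℕ, p.Prime → (p : ℤ) ∣ a → (p : ℤ) ∣ b := by
  constructor
  · intro hL p hp hpa
    obtain ⟨m, hm, hdvd⟩ := hL p hp
    obtain ⟨m, rfl⟩ : ∃ m', m = m' + 1 := ⟨m - 1, by omega⟩
    rw [iterEval_succ] at hdvd
    simp only [eval_add, eval_mul, eval_C, eval_X] at hdvd
    exact (dvd_add_right (hpa.mul_right _)).mp hdvd
  · intro h p hp
    by_cases hpa : (p : ℤ) ∣ a
    · exact ⟨1, le_rfl, by rw [iterEval_affine]; simpa using h p hp hpa⟩
    · have := Fact.mk hp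
      refine (exists_dvd_iterEval_zero_iff_mem_periodicPts p).mpr <|
        Function.Injective.mem_periodicPts (fun x y hxy => ?_) 0
      have ha : (a : ZMod p) ≠ 0 := by rwa [Ne, ZMod.intCast_zmod_eq_zero_iff_dvd]
      simpa [evalZMod, ha] using hxy

end Affine

theorem S_zero_classification (u : Polynomial ℤ) (hu : 0 < u.natDegree) :
    (LocallyNilpotentAt u 0 ∧ ¬ IsNilpotentAt u 0) ↔
      ((∃ b : ℤ, b ≠ 0 ∧ u = X + C b) ∨
       (∃ a b : ℤ, b ≠ 0 ∧ (∃ p : ℕ, Nat.Prime p ∧ (p : ℤ) ∣ a) ∧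
          (∀ p : ℕ, Nat.Prime p → (p : ℤ) ∣ a → (p : ℤ) ∣ b) ∧ u = C a * X + C b)) := by
  obtain hdeg | hdeg := lt_or_ge u.natDegree 2
  · obtain ⟨a, b, rfl⟩ : ∃ a b, u = C a * X + C b :=
      ⟨_, _, eq_X_add_C_of_natDegree_le_one (by omega)⟩
    have ha : a ≠ 0 := by rintro rfl; simp at hu
    have hX (b' : ℤ) : (X + C b' : ℤ[X]) = C 1 * X + C b' := by simp
    simp only [locallyNilpotentAt_affine_iff, isNilpotentAt_affine_iff, hX, C_mul_X_add_C_eq_iff,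
      Int.exists_prime_dvd_iff_natAbs_ne_one]
    constructor
    · rintro ⟨hdvd, hb⟩
      rw [not_or] at hb
      by_cases ha1 : a = 1
      · exact Or.inl ⟨b, hb.1, ha1, rfl⟩
      · exact Or.inr ⟨a, b, hb.1, by omega, hdvd, rfl, rfl⟩
    · rintro (⟨b, hb, rfl, rfl⟩ | ⟨a, b, hb, ha1, hdvd, rfl, rfl⟩)
      · exact ⟨fun p hp h => (hp.ne_one (Nat.dvd_one.mp (Int.natCast_dvd.mp h))).elim,
          by simp [hb]⟩
      · exact ⟨hdvd, by omega⟩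
  · refine iff_of_false (fun h => h.2 (isNilpotentAt_of_locallyNilpotentAt hdeg h.1)) ?_
    rintro (⟨b, -, rfl⟩ | ⟨a, b, -, -, -, rfl⟩)
    · exact absurd hdeg (by rw [natDegree_X_add_C]; omega)
    · linarith [natDegree_linear_le (a := a) (b := b)]
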